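/- For v ∈ (0, 1/2), let t* = arccos v be the angular coordinate of the boundary point of A₁ ∩ A₂ lying in the interior of A₁ (i.e., ∂(A₁∩A₂) ∩ int(A₁)). Then for every φ with |φ| ≤ 2π/3 - arccos v, one has g(φ) ≥ g(2π/3 - arccos v) > 1, i.e., the Kasner map is uniformly expanding on A₁ \ (A₁₂ ∪ A₁₃) with expansion constant g(2π/3 - arccos v) > 1. -/
import Mathlib


open Real

/-- For `v ∈ (0,1/2)`, the Kasner map is uniformly expanding on
`A₁ \ (A₁₂ ∪ A₁₃)`: for every `φ` with `|φ| ≤ 2π/3 - arccos v`, the expansion factor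
`g(φ) = (1-v²)/(v² + 1 - 2v·cos φ)` satisfies `g(φ) ≥ g(2π/3 - arccos v)`, and the uniform
expansion constant satisfies `g(2π/3 - arccos v) > 1`. -/
theorem uniform_expansion_off_overlaps (v : ℝ) (hv : v ∈ Set.Ioo (0:ℝ) (1/2)) :
    (∀ φ : ℝ, |φ| ≤ 2*π/3 - Real.arccos v →
      (1 - v ^ 2) / (v ^ 2 + 1 - 2 * v * Real.cos φ)
        ≥ (1 - v ^ 2) / (v ^ 2 + 1 - 2 * v * Real.cos (2*π/3 - Real.arccos v))) ∧
    (1 - v ^ 2) / (v ^ 2 + 1 - 2 * v * Real.cos (2*π/3 - Real.arccos v)) > 1 := by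
  obtain ⟨hv0, hv2⟩ := hv
  have hπ := Real.pi_pos
  have hlt : Real.arccos v < π/2 := (Real.arccos_lt_pi_div_two).mpr hv0
  have hgt : π/3 < Real.arccos v := by
    have h12 : Real.arccos (1/2) < Real.arccos v :=
      Real.strictAntiOn_arccos ⟨by linarith, by linarith⟩ ⟨by norm_num, by norm_num⟩ hv2
    rwa [← Real.cos_pi_div_three, Real.arccos_cos (by linarith) (by linarith)] at h12
  set θ := 2*π/3 - Real.arccos v with hθ
  have hθ0 : 0 < θ := by rw [hθ]; linarith
  have hθπ : θ < Real.arccos v := by rw [hθ]; linarith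
  have haπ : Real.arccos v ≤ π := Real.arccos_le_pi v
  have hcθ : v < Real.cos θ := by
    have := Real.cos_lt_cos_of_nonneg_of_le_pi hθ0.le haπ hθπ
    rwa [Real.cos_arccos (by linarith) (by linarith)] at this
  have hcθ1 : Real.cos θ ≤ 1 := Real.cos_le_one θ
  have hdθ : 0 < v ^ 2 + 1 - 2 * v * Real.cos θ := by nlinarith
  constructor
  · intro φ hφ
    have hcφ : Real.cos θ ≤ Real.cos φ := by
      rw [← Real.cos_abs φ]
      exact Real.cos_le_cos_of_nonneg_of_le_pi (abs_nonneg φ) (by linarith) hφ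
    have hdφ : 0 < v ^ 2 + 1 - 2 * v * Real.cos φ := by
      have := Real.cos_le_one φ; nlinarith
    have hnum : (0:ℝ) ≤ 1 - v ^ 2 := by nlinarith
    apply div_le_div_of_nonneg_left hnum hdφ
    nlinarith
  · rw [gt_iff_lt, lt_div_iff₀ hdθ]
    nlinarith
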